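/- Let λ > 0 and let p ≥ 1 be an integer; for 1 ≤ j ≤ 2p set σ_j = 1 if j is even and σ_j = −1 if j is odd. Then there is a constant C > 0, depending only on p and λ, such that for all ε ∈ [0,1], all real N ≥ 1, all t ≥ 0 and all points x₁,…,x_{2p} ∈ ℝ², ∏_{1 ≤ j < k ≤ 2p} 𝒥_{ε,N}(t, x_j − x_k)^{σ_j σ_k λ} ≤ C · max_{τ ∈ S_p} ∏_{j=1}^{p} 𝒥_{ε,N}(t, x_{2j} − x_{2τ(j)−1})^{−λ}, where S_p is the set of permutations of {1,…,p}. -/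

import Mathlib

/-- The sine-Gordon two-point potential `𝒥_{ε,N}(t,·)` as a function of the distance `r`:
if `ε = 0` or `N ≤ (2ε)^{−1}` it is `(r+N^{−1})/(r+√t+N^{−1})`, otherwise it is
`((r+ε)/(r+√t+ε))·((r+N^{−1})/(r+ε))^{1−e^{−t/ε²}}`. -/
noncomputable def Jpot (ε N t r : ℝ) : ℝ :=
  if ε = 0 ∨ N ≤ 1 / (2 * ε) then (r + 1 / N) / (r + Real.sqrt t + 1 / N)
  else ((r + ε) / (r + Real.sqrt t + ε)) *
    ((r + 1 / N) / (r + ε)) ^ (1 - Real.exp (-t / ε ^ 2))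

/-- The alternating sign `σ_j` attached to the `j`-th point (`1`-based): `+1` if `j` is
even, `−1` if `j` is odd; here `i` is the `0`-based index. -/
def sgn {m : ℕ} (i : Fin m) : ℝ := if (i : ℕ) % 2 = 1 then 1 else -1

/-!
Pair the charges greedily. If `(a, b)` is the closest pair of opposite charges and `z` has the
sign of `a`, then `|a - z| ≤ |a - b| + |b - z| ≤ 2 |z - b|`. Since `𝒥(r) ≤ 4 𝒥(r')` whenever
`r ≤ 2 r'`, the repulsive factor `𝒥(|a - z|)^λ` is cancelled by the attractive factor
`𝒥(|z - b|)^{-λ}` up to `4^λ`, and symmetrically for the charges of the sign of `b`. Removing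
`a` and `b` and iterating leaves only the factors `𝒥^{-λ}` along a perfect matching, at a total
cost of `4^{λ p (p - 1)}`.
-/

open Finset

section PairProd

variable {ι κ M : Type*} [LinearOrder ι] [LinearOrder κ] [CommMonoid M]

def pairProd (S : Finset ι) (w : ι → ι → M) : M :=
  ∏ i ∈ S, ∏ j ∈ S, if i < j then w i j else 1

lemma ite_lt_mul_ite_lt {w : ι → ι → M} (hw : ∀ i j, w i j = w j i) {i j : ι} (hij : i ≠ j) :
    ((if i < j then w i j else 1) * if j < i then w j i else 1) = w i j := by
  rcases hij.lt_or_gt with h | h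
  · simp [h, h.not_gt]
  · simp [h, h.not_gt, hw i j]

lemma pairProd_union {A B : Finset ι} (hAB : Disjoint A B) {w : ι → ι → M}
    (hw : ∀ i j, w i j = w j i) :
    pairProd (A ∪ B) w = pairProd A w * pairProd B w * ∏ i ∈ A, ∏ j ∈ B, w i j := by
  have cross : (∏ i ∈ A, ∏ j ∈ B, if i < j then w i j else 1) *
      (∏ j ∈ B, ∏ i ∈ A, if j < i then w j i else 1) = ∏ i ∈ A, ∏ j ∈ B, w i j := by
    rw [prod_comm (s := B), ← prod_mul_distrib]
    refine prod_congr rfl fun i hi => ?_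
    rw [← prod_mul_distrib]
    exact prod_congr rfl fun j hj => ite_lt_mul_ite_lt hw (disjoint_left.mp hAB hi <| · ▸ hj)
  simp only [pairProd, prod_union hAB, prod_mul_distrib]
  rw [← cross]
  ac_rfl

lemma pairProd_insert {a : ι} {S : Finset ι} (ha : a ∉ S) {w : ι → ι → M}
    (hw : ∀ i j, w i j = w j i) :
    pairProd (insert a S) w = (∏ j ∈ S, w a j) * pairProd S w := by
  rw [insert_eq, pairProd_union (disjoint_singleton_left.mpr ha) hw]
  simp [pairProd, mul_comm]

lemma pairProd_map (e : ι ↪o κ) (S : Finset ι) (w : κ → κ → M) :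
    pairProd (S.map e.toEmbedding) w = pairProd S fun i j => w (e i) (e j) := by
  simp [pairProd]

end PairProd

lemma pairProd_nonneg {ι R : Type*} [LinearOrder ι] [CommSemiring R] [PartialOrder R]
    [IsOrderedRing R] {S : Finset ι} {w : ι → ι → R} (hw : ∀ i j, 0 ≤ w i j) :
    0 ≤ pairProd S w :=
  prod_nonneg fun i _ => prod_nonneg fun j _ => by split_ifs <;> simp [hw]

lemma add_div_add_le_two_mul {a b r r' : ℝ} (ha : 0 < a) (hb : 0 < b) (hab : a ≤ 2 * b)
    (hr : 0 ≤ r) (hrr' : r ≤ 2 * r') : (r + a) / (r + b) ≤ 2 * ((r' + a) / (r' + b)) := by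
  have hr' : 0 ≤ r' := by linarith
  rw [mul_div_assoc', div_le_div_iff₀ (by linarith) (by linarith)]
  nlinarith [mul_nonneg (by linarith : (0:ℝ) ≤ 2 * r' - r) hb.le,
    mul_nonneg (by linarith : (0:ℝ) ≤ 2 * r' - r) ha.le,
    mul_nonneg (by linarith : (0:ℝ) ≤ 2 * r' - r) hr',
    mul_nonneg (by linarith : (0:ℝ) ≤ 2 * b - a) hr',
    mul_nonneg ha.le hb.le, mul_nonneg hr hr', mul_nonneg ha.le hr']

lemma rpow_le_mul_rpow_of_le_mul {x y c θ : ℝ} (hx : 0 ≤ x) (hxy : x ≤ c * y) (hc : 1 ≤ c)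
    (hθ0 : 0 ≤ θ) (hθ1 : θ ≤ 1) : x ^ θ ≤ c * y ^ θ := by
  have hy : 0 ≤ y := nonneg_of_mul_nonneg_right (hx.trans hxy) (by linarith)
  calc x ^ θ ≤ (c * y) ^ θ := Real.rpow_le_rpow hx hxy hθ0
    _ = c ^ θ * y ^ θ := Real.mul_rpow (by linarith) hy
    _ ≤ c * y ^ θ := by
      gcongr
      simpa using Real.rpow_le_rpow_of_exponent_le hc hθ1

section Jpot

variable {ε N t r r' : ℝ}

lemma Jpot_pos (hε : 0 ≤ ε) (hN : 0 < N) (hr : 0 ≤ r) : 0 < Jpot ε N t r := by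
  unfold Jpot
  split_ifs with h
  · positivity
  · have hε0 : 0 < ε := hε.lt_of_ne (Ne.symm (not_or.mp h).1)
    positivity

lemma Jpot_le_four_mul (hε : 0 ≤ ε) (hN : 0 < N) (ht : 0 ≤ t) (hr : 0 ≤ r)
    (hrr' : r ≤ 2 * r') : Jpot ε N t r ≤ 4 * Jpot ε N t r' := by
  have hr' : 0 ≤ r' := by linarith
  have hs := Real.sqrt_nonneg t
  have hN' : 0 < 1 / N := by positivity
  unfold Jpot
  split_ifs with h
  · have hle := add_div_add_le_two_mul (a := 1 / N) (b := √t + 1 / N) hN' (by positivity)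
      (by linarith) hr hrr'
    simp only [← add_assoc] at hle
    have hnonneg : 0 ≤ (r' + 1 / N) / (r' + √t + 1 / N) := by positivity
    linarith
  · obtain ⟨hε_ne, hNε⟩ := not_or.mp h
    have hε0 : 0 < ε := hε.lt_of_ne (Ne.symm hε_ne)
    have hN2ε : 1 / N ≤ 2 * ε := by
      rw [not_le, div_lt_iff₀ (by positivity)] at hNε
      rw [div_le_iff₀ hN]
      linarith
    have hθ0 : 0 ≤ 1 - Real.exp (-t / ε ^ 2) := by
      have : -t / ε ^ 2 ≤ 0 := div_nonpos_of_nonpos_of_nonneg (by linarith) (by positivity)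
      linarith [Real.exp_le_one_iff.mpr this]
    have hθ1 : 1 - Real.exp (-t / ε ^ 2) ≤ 1 := by linarith [Real.exp_pos (-t / ε ^ 2)]
    have hfirst := add_div_add_le_two_mul (b := √t + ε) hε0 (by positivity) (by linarith) hr hrr'
    simp only [← add_assoc] at hfirst
    have hsecond := rpow_le_mul_rpow_of_le_mul (by positivity)
      (add_div_add_le_two_mul hN' hε0 hN2ε hr hrr') one_le_two hθ0 hθ1
    calc _ ≤ (2 * ((r' + ε) / (r' + √t + ε))) *
          (2 * ((r' + 1 / N) / (r' + ε)) ^ (1 - Real.exp (-t / ε ^ 2))) := by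
          gcongr
      _ = _ := by ring

end Jpot

lemma Set.BijOn.update_of_erase {ι κ : Type*} [DecidableEq ι] [DecidableEq κ] {g : ι → κ}
    {a : ι} {b : κ} {S : Finset ι} {T : Finset κ}
    (hg : Set.BijOn g (S.erase a) (T.erase b)) (ha : a ∈ S) (hb : b ∈ T) :
    Set.BijOn (Function.update g a b) S T := by
  have hg' : Set.BijOn (Function.update g a b) (S.erase a) (T.erase b) :=
    hg.congr fun i hi => (Function.update_of_ne (ne_of_mem_erase hi) ..).symm
  have := hg'.insert (a := a) (by simp)
  rwa [Function.update_self, ← coe_insert, ← coe_insert, insert_erase ha,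
    insert_erase hb] at this

section Doubling

variable {ι E : Type*} [PseudoMetricSpace E] {f : ℝ → ℝ} {B : ℝ}

lemma mul_inv_le_of_dist_le (hf_pos : ∀ r, 0 ≤ r → 0 < f r)
    (hf_doubling : ∀ r r', 0 ≤ r → r ≤ 2 * r' → f r ≤ B * f r') {x y z : E}
    (h : dist x y ≤ dist z y) : f (dist x z) * (f (dist z y))⁻¹ ≤ B := by
  have hxz : dist x z ≤ 2 * dist z y := by
    linarith [dist_triangle x y z, dist_comm y z]
  rw [mul_inv_le_iff₀ (hf_pos _ dist_nonneg)]
  exact hf_doubling _ _ dist_nonneg hxz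

lemma prod_mul_inv_le_pow_card (hf_pos : ∀ r, 0 ≤ r → 0 < f r)
    (hf_doubling : ∀ r r', 0 ≤ r → r ≤ 2 * r' → f r ≤ B * f r') {x y : E} {w : ι → E}
    {s : Finset ι} (h : ∀ i ∈ s, dist x y ≤ dist (w i) y) :
    ∏ i ∈ s, f (dist x (w i)) * (f (dist (w i) y))⁻¹ ≤ B ^ s.card := by
  rw [← prod_const]
  exact prod_le_prod
    (fun i _ => (mul_pos (hf_pos _ dist_nonneg) (inv_pos.mpr (hf_pos _ dist_nonneg))).le)
    fun i hi => mul_inv_le_of_dist_le hf_pos hf_doubling (h i hi)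

end Doubling

section Charges

variable {ι E : Type*} [LinearOrder ι] [PseudoMetricSpace E]

noncomputable def chargeInteraction (f : ℝ → ℝ) (u v : ι → E) (S T : Finset ι) : ℝ :=
  pairProd S (fun i i' => f (dist (u i) (u i'))) *
    pairProd T (fun j j' => f (dist (v j) (v j'))) *
    ∏ i ∈ S, ∏ j ∈ T, (f (dist (u i) (v j)))⁻¹

lemma chargeInteraction_nonneg {f : ℝ → ℝ} (hf : ∀ r, 0 ≤ r → 0 ≤ f r) (u v : ι → E)
    (S T : Finset ι) : 0 ≤ chargeInteraction f u v S T := by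
  have hdist (x y : E) : 0 ≤ f (dist x y) := hf _ dist_nonneg
  unfold chargeInteraction
  exact mul_nonneg (mul_nonneg (pairProd_nonneg fun i j => hdist (u i) (u j))
    (pairProd_nonneg fun i j => hdist (v i) (v j)))
    (prod_nonneg fun i _ => prod_nonneg fun j _ => inv_nonneg.mpr (hdist _ _))

lemma chargeInteraction_insert (f : ℝ → ℝ) (u v : ι → E) {a b : ι} {S T : Finset ι}
    (ha : a ∉ S) (hb : b ∉ T) :
    chargeInteraction f u v (insert a S) (insert b T) =
      (f (dist (u a) (v b)))⁻¹ *
        (∏ i ∈ S, f (dist (u a) (u i)) * (f (dist (u i) (v b)))⁻¹) *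
        (∏ j ∈ T, f (dist (v b) (v j)) * (f (dist (v j) (u a)))⁻¹) *
        chargeInteraction f u v S T := by
  have hsymm (w : ι → E) (i j : ι) : f (dist (w i) (w j)) = f (dist (w j) (w i)) := by
    rw [dist_comm]
  rw [chargeInteraction, chargeInteraction, pairProd_insert ha (hsymm u),
    pairProd_insert hb (hsymm v)]
  simp only [prod_insert ha, prod_insert hb, prod_mul_distrib, dist_comm (v _) (u a)]
  ring

variable {f : ℝ → ℝ} {B : ℝ}

lemma chargeInteraction_insert_le (hf_pos : ∀ r, 0 ≤ r → 0 < f r)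
    (hf_doubling : ∀ r r', 0 ≤ r → r ≤ 2 * r' → f r ≤ B * f r') (u v : ι → E) {a b : ι}
    {S T : Finset ι} (ha : a ∉ S) (hb : b ∉ T)
    (hmin : ∀ i ∈ insert a S, ∀ j ∈ insert b T, dist (u a) (v b) ≤ dist (u i) (v j)) :
    chargeInteraction f u v (insert a S) (insert b T) ≤
      (f (dist (u a) (v b)))⁻¹ * B ^ S.card * B ^ T.card * chargeInteraction f u v S T := by
  have hterm (w x y z : E) : 0 ≤ f (dist w x) * (f (dist y z))⁻¹ :=
    (mul_pos (hf_pos _ dist_nonneg) (inv_pos.mpr (hf_pos _ dist_nonneg))).le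
  have hu := prod_mul_inv_le_pow_card hf_pos hf_doubling (x := u a) (y := v b) (w := u)
    (s := S) fun i hi => hmin i (mem_insert_of_mem hi) b (mem_insert_self b T)
  have hv := prod_mul_inv_le_pow_card hf_pos hf_doubling (x := v b) (y := u a) (w := v)
    (s := T) fun j hj => by
      simpa only [dist_comm] using hmin a (mem_insert_self a S) j (mem_insert_of_mem hj)
  have hu0 := prod_nonneg fun i (_ : i ∈ S) => hterm (u a) (u i) (u i) (v b)
  have hv0 := prod_nonneg fun j (_ : j ∈ T) => hterm (v b) (v j) (v j) (u a)
  have hfab := (inv_pos.mpr (hf_pos _ (dist_nonneg (x := u a) (y := v b)))).le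
  rw [chargeInteraction_insert f u v ha hb]
  gcongr
  · exact chargeInteraction_nonneg (fun r hr => (hf_pos r hr).le) u v S T
  · exact mul_nonneg hfab (hu0.trans hu)

theorem exists_bijOn_chargeInteraction_le (hf_pos : ∀ r, 0 ≤ r → 0 < f r)
    (hf_doubling : ∀ r r', 0 ≤ r → r ≤ 2 * r' → f r ≤ B * f r') (u v : ι → E)
    {S T : Finset ι} (hST : S.card = T.card) :
    ∃ g : ι → ι, Set.BijOn g S T ∧
      chargeInteraction f u v S T ≤
        (B ^ 2) ^ S.card.choose 2 * ∏ i ∈ S, (f (dist (u i) (v (g i))))⁻¹ := by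
  have hB : 0 ≤ B := by
    have h0 := hf_pos 0 le_rfl
    have := hf_doubling 0 0 le_rfl (by norm_num)
    nlinarith
  induction hn : S.card generalizing S T with
  | zero =>
    obtain rfl := card_eq_zero.mp hn
    obtain rfl := card_eq_zero.mp (hST ▸ hn)
    exact ⟨id, by simp, by simp [chargeInteraction, pairProd]⟩
  | succ n ih =>
    obtain ⟨⟨a, b⟩, hab, hmin⟩ := exists_min_image (S ×ˢ T) (fun q => dist (u q.1) (v q.2))
      ((card_pos.mp (by omega)).product (card_pos.mp (by omega)))
    obtain ⟨ha, hb⟩ := mem_product.mp hab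
    have hSn : (S.erase a).card = n := by rw [card_erase_of_mem ha, hn]; rfl
    have hTn : (T.erase b).card = n := by rw [card_erase_of_mem hb, ← hST, hn]; rfl
    obtain ⟨g, hg, hle⟩ := ih (hSn.trans hTn.symm) hSn
    have hstep := chargeInteraction_insert_le hf_pos hf_doubling u v (notMem_erase a S)
      (notMem_erase b T) (by
        rw [insert_erase ha, insert_erase hb]
        exact fun i hi j hj => hmin (i, j) (mem_product.mpr ⟨hi, hj⟩))
    rw [insert_erase ha, insert_erase hb, hSn, hTn] at hstep
    have hfab := (inv_pos.mpr (hf_pos _ (dist_nonneg (x := u a) (y := v b)))).le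
    refine ⟨Function.update g a b, hg.update_of_erase ha hb, ?_⟩
    calc chargeInteraction f u v S T
        ≤ (f (dist (u a) (v b)))⁻¹ * B ^ n * B ^ n *
            ((B ^ 2) ^ n.choose 2 * ∏ i ∈ S.erase a, (f (dist (u i) (v (g i))))⁻¹) :=
          hstep.trans (mul_le_mul_of_nonneg_left hle (by positivity))
      _ = (B ^ 2) ^ (n + 1).choose 2 *
            ((f (dist (u a) (v b)))⁻¹ * ∏ i ∈ S.erase a, (f (dist (u i) (v (g i))))⁻¹) := by
          rw [Nat.choose_succ_succ', Nat.choose_one_right]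
          ring
      _ = (B ^ 2) ^ (n + 1).choose 2 *
            ∏ i ∈ S, (f (dist (u i) (v (Function.update g a b i))))⁻¹ := by
          rw [← mul_prod_erase S _ ha, Function.update_self]
          congr 2
          exact prod_congr rfl fun i hi => by rw [Function.update_of_ne (ne_of_mem_erase hi)]

end Charges

section AlternatingCharges

variable {p : ℕ}

def oddIndex (p : ℕ) : Fin p ↪o Fin (2 * p) :=
  OrderEmbedding.ofStrictMono (fun q => ⟨2 * q + 1, by omega⟩) fun a b h => by
    simp only [Fin.lt_def] at h ⊢
    omega

def evenIndex (p : ℕ) : Fin p ↪o Fin (2 * p) :=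
  OrderEmbedding.ofStrictMono (fun q => ⟨2 * q, by omega⟩) fun a b h => by
    simp only [Fin.lt_def] at h ⊢
    omega

@[simp]
lemma val_oddIndex (q : Fin p) : (oddIndex p q : ℕ) = 2 * q + 1 := rfl

@[simp]
lemma val_evenIndex (q : Fin p) : (evenIndex p q : ℕ) = 2 * q := rfl

@[simp]
lemma sgn_oddIndex (q : Fin p) : sgn (oddIndex p q) = 1 := by
  simp [sgn]

@[simp]
lemma sgn_evenIndex (q : Fin p) : sgn (evenIndex p q) = -1 := by
  simp [sgn]

lemma univ_eq_map_oddIndex_union_map_evenIndex :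
    (univ : Finset (Fin (2 * p))) =
      univ.map (oddIndex p).toEmbedding ∪ univ.map (evenIndex p).toEmbedding := by
  ext k
  simp only [mem_univ, mem_union, mem_map, true_and, true_iff]
  rcases Nat.even_or_odd' k with ⟨q, hq | hq⟩
  · exact Or.inr ⟨⟨q, by omega⟩, Fin.ext hq.symm⟩
  · exact Or.inl ⟨⟨q, by omega⟩, Fin.ext hq.symm⟩

lemma disjoint_map_oddIndex_map_evenIndex :
    Disjoint (univ.map (oddIndex p).toEmbedding) (univ.map (evenIndex p).toEmbedding) := by
  simp only [disjoint_left, mem_map, mem_univ, true_and, not_exists, forall_exists_index]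
  rintro _ q rfl q' h
  have := congrArg Fin.val h
  simp only [RelEmbedding.coe_toEmbedding, val_oddIndex, val_evenIndex] at this
  omega

lemma alternating_prod_eq_chargeInteraction {E : Type*} [SeminormedAddCommGroup E]
    {J : ℝ → ℝ} (hJ : ∀ r, 0 ≤ r → 0 ≤ J r) (lam : ℝ) (x : Fin (2 * p) → E) :
    (∏ j : Fin (2 * p), ∏ k : Fin (2 * p),
        if j < k then J ‖x j - x k‖ ^ (sgn j * sgn k * lam) else 1) =
      chargeInteraction (fun r => J r ^ lam) (x ∘ oddIndex p) (x ∘ evenIndex p) univ univ := by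
  change pairProd univ (fun j k => J ‖x j - x k‖ ^ (sgn j * sgn k * lam)) = _
  simp_rw [← dist_eq_norm]
  rw [univ_eq_map_oddIndex_union_map_evenIndex,
    pairProd_union disjoint_map_oddIndex_map_evenIndex fun j k => by
      rw [dist_comm, mul_comm (sgn j)],
    pairProd_map, pairProd_map, chargeInteraction]
  simp [Real.rpow_neg (hJ _ dist_nonneg)]

end AlternatingCharges

/-- Cancellation of charge: for `λ > 0` and `p ≥ 1` there is `C > 0` such that for all
`ε ∈ [0,1]`, `N ≥ 1`, `t ≥ 0` and points `x₁,…,x_{2p} ∈ ℝ²`,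
`∏_{j<k} 𝒥_{ε,N}(t,x_j−x_k)^{σ_jσ_kλ} ≤ C·max_{τ∈S_p} ∏_j 𝒥_{ε,N}(t,x_{2j}−x_{2τ(j)−1})^{−λ}`. -/
theorem cancellation_of_charge (lam : ℝ) (hlam : 0 < lam) (p : ℕ) :
    ∃ C : ℝ, 0 < C ∧
      ∀ (ε N t : ℝ) (x : Fin (2 * p) → EuclideanSpace ℝ (Fin 2)),
        ε ∈ Set.Icc (0:ℝ) 1 → 1 ≤ N → 0 ≤ t →
        (∏ j : Fin (2 * p), ∏ k : Fin (2 * p),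
          if j < k then Jpot ε N t ‖x j - x k‖ ^ (sgn j * sgn k * lam) else 1)
          ≤ C * ⨆ τ : Equiv.Perm (Fin p),
              ∏ j : Fin p,
                Jpot ε N t
                    ‖x ⟨2 * (j : ℕ) + 1, by have := j.isLt; omega⟩ -
                      x ⟨2 * ((τ j : Fin p) : ℕ), by have := (τ j).isLt; omega⟩‖
                  ^ (-lam) := by
  refine ⟨((4 ^ lam) ^ 2) ^ p.choose 2, by positivity, fun ε N t x hε hN ht => ?_⟩
  have hJ_pos (r : ℝ) (hr : 0 ≤ r) : 0 < Jpot ε N t r := Jpot_pos hε.1 (by linarith) hr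
  obtain ⟨g, hg, hle⟩ := exists_bijOn_chargeInteraction_le (f := fun r => Jpot ε N t r ^ lam)
    (fun r hr => Real.rpow_pos_of_pos (hJ_pos r hr) lam)
    (fun r r' hr hrr' => by
      rw [← Real.mul_rpow (x := 4) (by norm_num) (hJ_pos r' (by linarith)).le]
      exact Real.rpow_le_rpow (hJ_pos r hr).le
        (Jpot_le_four_mul hε.1 (by linarith) ht hr hrr') hlam.le)
    (x ∘ oddIndex p) (x ∘ evenIndex p) (S := univ) (T := univ) rfl
  let τ := Equiv.ofBijective g (Set.bijOn_univ.mp (by simpa using hg))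
  rw [card_univ, Fintype.card_fin] at hle
  rw [alternating_prod_eq_chargeInteraction fun r hr => (hJ_pos r hr).le]
  refine hle.trans (mul_le_mul_of_nonneg_left ?_ (by positivity))
  refine le_of_eq_of_le ?_ (le_ciSup (Set.finite_range _).bddAbove τ)
  refine prod_congr rfl fun j _ => ?_
  rw [Real.rpow_neg (hJ_pos _ (norm_nonneg _)).le, dist_eq_norm]
  rfl
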